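/- The restricted right rule for the intuitionistic universal quantifier is sound: if Θ is a finite set of persistent formulas, z is a variable not occurring free in Θ or in ∀ᵢx A, and Θ ⊨ A[z/x] holds, then Θ ⊨ ∀ᵢx A holds. -/

import Mathlib

/-- Terms: variables (named by naturals) and constant symbols. -/
inductive Tm : Type
| var : ℕ → Tm
| const : ℕ → Tm
deriving DecidableEq

/-- Formulas of the combined language: atoms, ⊥, ∧, ∨, intuitionistic and
classical implication, intuitionistic and classical universal quantifier,
and the existential quantifier. -/
inductive Fm : Type
| atom : ℕ → List Tm → Fm
| bot : Fm
| and : Fm → Fm → Fm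
| or : Fm → Fm → Fm
| impI : Fm → Fm → Fm
| impC : Fm → Fm → Fm
| allI : ℕ → Fm → Fm
| allC : ℕ → Fm → Fm
| ex : ℕ → Fm → Fm
deriving DecidableEq

def Fm.top : Fm := .impI .bot .bot
def Fm.negC (A : Fm) : Fm := .impC A .bot
def Fm.negI (A : Fm) : Fm := .impI A .bot

def Tm.fv : Tm → Set ℕ
| .var x => {x}
| .const _ => ∅

/-- Free variables of a formula. -/
def Fm.fv : Fm → Set ℕ
| .atom _ ts => {x | ∃ t ∈ ts, x ∈ t.fv}
| .bot => ∅
| .and A B => A.fv ∪ B.fv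
| .or A B => A.fv ∪ B.fv
| .impI A B => A.fv ∪ B.fv
| .impC A B => A.fv ∪ B.fv
| .allI x A => A.fv \ {x}
| .allC x A => A.fv \ {x}
| .ex x A => A.fv \ {x}

/-- Bound variables of a formula. -/
def Fm.bv : Fm → Set ℕ
| .atom _ _ => ∅
| .bot => ∅
| .and A B => A.bv ∪ B.bv
| .or A B => A.bv ∪ B.bv
| .impI A B => A.bv ∪ B.bv
| .impC A B => A.bv ∪ B.bv
| .allI x A => insert x A.bv
| .allC x A => insert x A.bv
| .ex x A => insert x A.bv

/-- All variables (free and bound) of a formula. -/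
def Fm.vars : Fm → Set ℕ
| .atom _ ts => {x | ∃ t ∈ ts, x ∈ t.fv}
| .bot => ∅
| .and A B => A.vars ∪ B.vars
| .or A B => A.vars ∪ B.vars
| .impI A B => A.vars ∪ B.vars
| .impC A B => A.vars ∪ B.vars
| .allI x A => insert x A.vars
| .allC x A => insert x A.vars
| .ex x A => insert x A.vars

def Tm.subst (x : ℕ) (u : Tm) : Tm → Tm
| .var y => if y = x then u else .var y
| .const c => .const c

/-- Substitution of term `u` for variable `x` (under the standing assumption
that bound and free variables are disjoint, this is clash-avoiding). -/
def Fm.subst : Fm → ℕ → Tm → Fm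
| .atom P ts, x, u => .atom P (ts.map (Tm.subst x u))
| .bot, _, _ => .bot
| .and A B, x, u => .and (A.subst x u) (B.subst x u)
| .or A B, x, u => .or (A.subst x u) (B.subst x u)
| .impI A B, x, u => .impI (A.subst x u) (B.subst x u)
| .impC A B, x, u => .impC (A.subst x u) (B.subst x u)
| .allI y A, x, u => .allI y (if y = x then A else A.subst x u)
| .allC y A, x, u => .allC y (if y = x then A else A.subst x u)
| .ex y A, x, u => .ex y (if y = x then A else A.subst x u)

/-- Persistent formulas: atoms, →ᵢ-formulas and ∀ᵢ-formulas. -/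
def Fm.Persistent : Fm → Prop
| .atom _ _ => True
| .impI _ _ => True
| .allI _ _ => True
| _ => False

/-- Purely intuitionistic formulas (no →_c, no ∀_c). -/
def Fm.IsJ : Fm → Prop
| .atom _ _ => True
| .bot => True
| .and A B => A.IsJ ∧ B.IsJ
| .or A B => A.IsJ ∧ B.IsJ
| .impI A B => A.IsJ ∧ B.IsJ
| .impC _ _ => False
| .allI _ A => A.IsJ
| .allC _ _ => False
| .ex _ A => A.IsJ

/-- Purely classical formulas (no →ᵢ, no ∀ᵢ). -/
def Fm.IsC : Fm → Prop
| .atom _ _ => True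
| .bot => True
| .and A B => A.IsC ∧ B.IsC
| .or A B => A.IsC ∧ B.IsC
| .impI _ _ => False
| .impC A B => A.IsC ∧ B.IsC
| .allI _ _ => False
| .allC _ A => A.IsC
| .ex _ A => A.IsC

/-- A raw Kripke structure for the combined first-order language. -/
structure KModel (U : Type) where
  W : Type
  R : W → W → Prop
  D : W → Set U
  cI : ℕ → U
  V : ℕ → W → Set (List U)

/-- The conditions making a raw structure an intuitionistic Kripke model:
`R` is a preorder, domains are nonempty, monotone, with nonempty
intersection, constants are rigid (interpreted in every domain), and the
predicate valuation is monotone (hereditary) along `R`. -/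
structure KModel.IsKripke {U : Type} (M : KModel U) : Prop where
  wNonempty : Nonempty M.W
  refl : ∀ w, M.R w w
  trans : ∀ {w v u}, M.R w v → M.R v u → M.R w u
  dNonempty : ∀ w, (M.D w).Nonempty
  dMono : ∀ {w v}, M.R w v → M.D w ⊆ M.D v
  dInter : (⋂ w, M.D w).Nonempty
  cMem : ∀ c w, M.cI c ∈ M.D w
  vMono : ∀ P {w v}, M.R w v → M.V P w ⊆ M.V P v

def Tm.val {U : Type} (M : KModel U) (g : ℕ → U) : Tm → U
| .var x => g x
| .const c => M.cI c

/-- Satisfaction of a formula at a world under an assignment. -/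
def Fm.Sat {U : Type} (M : KModel U) : Fm → M.W → (ℕ → U) → Prop
| .atom P ts, w, g => ts.map (Tm.val M g) ∈ M.V P w
| .bot, _, _ => False
| .and A B, w, g => A.Sat M w g ∧ B.Sat M w g
| .or A B, w, g => A.Sat M w g ∨ B.Sat M w g
| .impI A B, w, g => ∀ v, M.R w v → A.Sat M v g → B.Sat M v g
| .impC A B, w, g => A.Sat M w g → B.Sat M w g
| .allI x A, w, g => ∀ v, M.R w v → ∀ d ∈ M.D v, A.Sat M v (Function.update g x d)
| .allC x A, w, g => ∀ d ∈ M.D w, A.Sat M w (Function.update g x d)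
| .ex x A, w, g => ∃ d ∈ M.D w, A.Sat M w (Function.update g x d)

/-- Multi-succedent semantic consequence: at every world of every Kripke
model, under any assignment into the domain, if all of `Γ` holds then some
member of `Δ` holds. -/
def Conseq (Γ Δ : List Fm) : Prop :=
  ∀ (U : Type) (M : KModel U), M.IsKripke → ∀ (w : M.W) (g : ℕ → U),
    (∀ x, g x ∈ M.D w) → (∀ A ∈ Γ, A.Sat M w g) → ∃ B ∈ Δ, B.Sat M w g

/-- The sequent calculus G(FOC+J). -/
inductive Der : List Fm → List Fm → Prop
| id (A : Fm) : Der [A] [A]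
| botL : Der [.bot] []
| perm {Γ Γ' Δ Δ'} : Γ.Perm Γ' → Δ.Perm Δ' → Der Γ Δ → Der Γ' Δ'
| wL {Γ Δ} (A) : Der Γ Δ → Der (A :: Γ) Δ
| wR {Γ Δ} (A) : Der Γ Δ → Der Γ (A :: Δ)
| cL {Γ Δ A} : Der (A :: A :: Γ) Δ → Der (A :: Γ) Δ
| cR {Γ Δ A} : Der Γ (A :: A :: Δ) → Der Γ (A :: Δ)
| cut {Γ Δ P S A} : Der Γ (A :: Δ) → Der (A :: P) S → Der (Γ ++ P) (Δ ++ S)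
| impIR {Θ A B} : (∀ C ∈ Θ, Fm.Persistent C) →
    Der (A :: Θ) [B] → Der Θ [.impI A B]
| impIL {Γ₁ Γ₂ Δ₁ Δ₂ A B} : Der Γ₁ (A :: Δ₁) → Der (B :: Γ₂) Δ₂ →
    Der (.impI A B :: (Γ₁ ++ Γ₂)) (Δ₁ ++ Δ₂)
| impCR {Γ Δ A B} : Der (A :: Γ) (B :: Δ) → Der Γ (.impC A B :: Δ)
| impCL {Γ₁ Γ₂ Δ₁ Δ₂ A B} : Der Γ₁ (A :: Δ₁) → Der (B :: Γ₂) Δ₂ →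
    Der (.impC A B :: (Γ₁ ++ Γ₂)) (Δ₁ ++ Δ₂)
| andR {Γ Δ A B} : Der Γ (A :: Δ) → Der Γ (B :: Δ) → Der Γ (.and A B :: Δ)
| andL1 {Γ Δ A B} : Der (A :: Γ) Δ → Der (.and A B :: Γ) Δ
| andL2 {Γ Δ A B} : Der (B :: Γ) Δ → Der (.and A B :: Γ) Δ
| orR1 {Γ Δ A B} : Der Γ (A :: Δ) → Der Γ (.or A B :: Δ)
| orR2 {Γ Δ A B} : Der Γ (B :: Δ) → Der Γ (.or A B :: Δ)
| orL {Γ Δ A B} : Der (A :: Γ) Δ → Der (B :: Γ) Δ → Der (.or A B :: Γ) Δ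
| allIR {Θ x z A} : (∀ C ∈ Θ, Fm.Persistent C) →
    (∀ C ∈ Θ, z ∉ Fm.fv C) → z ∉ Fm.fv (.allI x A) → z ∉ Fm.bv A →
    Der Θ [A.subst x (.var z)] → Der Θ [.allI x A]
| allIL {Γ Δ x A} (t : Tm) : (∀ y ∈ t.fv, y ∉ Fm.bv A) →
    Der (A.subst x t :: Γ) Δ → Der (.allI x A :: Γ) Δ
| allCR {Γ Δ x z A} : (∀ C ∈ Γ, z ∉ Fm.fv C) → (∀ C ∈ Δ, z ∉ Fm.fv C) →
    z ∉ Fm.fv (.allC x A) → z ∉ Fm.bv A →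
    Der Γ (A.subst x (.var z) :: Δ) → Der Γ (.allC x A :: Δ)
| allCL {Γ Δ x A} (t : Tm) : (∀ y ∈ t.fv, y ∉ Fm.bv A) →
    Der (A.subst x t :: Γ) Δ → Der (.allC x A :: Γ) Δ
| exR {Γ Δ x A} (t : Tm) : (∀ y ∈ t.fv, y ∉ Fm.bv A) →
    Der Γ (A.subst x t :: Δ) → Der Γ (.ex x A :: Δ)
| exL {Γ Δ x z A} : (∀ C ∈ Γ, z ∉ Fm.fv C) → (∀ C ∈ Δ, z ∉ Fm.fv C) →
    z ∉ Fm.fv (.ex x A) → z ∉ Fm.bv A →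
    Der (A.subst x (.var z) :: Γ) Δ → Der (.ex x A :: Γ) Δ

/-! Given `w R v` and `d ∈ D(v)`, apply the premise at `v` under `g[z ↦ d]`. The formulas
of `Θ` still hold there, being persistent and free of `z`. The substitution lemma turns
`A[z/x]` under `g[z ↦ d]` into `A` under `g[z ↦ d][x ↦ d]`, which agrees with `g[x ↦ d]`
on the free variables of `A` because `z` is not free in `∀ᵢx A`. -/

open Function Set

section Assignments

variable {U : Type} {g g' : ℕ → U} {s : Set ℕ} {x : ℕ} {d : U}

theorem eqOn_update_of_notMem (hx : x ∉ s) : EqOn (update g x d) g s :=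
  fun _ hy => update_of_ne (ne_of_mem_of_not_mem hy hx) d g

theorem eqOn_update_update (h : EqOn g g' (s \ {x})) :
    EqOn (update g x d) (update g' x d) s := by
  intro y hy
  by_cases hyx : y = x
  · simp [hyx]
  · simp [hyx, h ⟨hy, hyx⟩]

end Assignments

section Semantics

variable {U : Type} (M : KModel U)

theorem Tm.val_congr {t : Tm} {g g' : ℕ → U} (h : EqOn g g' t.fv) :
    t.val M g = t.val M g' := by
  cases t with
  | var y => exact h rfl
  | const c => rfl

theorem Tm.val_subst (u : Tm) (x : ℕ) (t : Tm) (g : ℕ → U) :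
    (Tm.subst x t u).val M g = u.val M (update g x (t.val M g)) := by
  cases u with
  | var y => by_cases hyx : y = x <;> simp [Tm.subst, Tm.val, hyx]
  | const c => rfl

theorem Fm.sat_congr (C : Fm) {w : M.W} {g g' : ℕ → U} (h : EqOn g g' C.fv) :
    C.Sat M w g ↔ C.Sat M w g' := by
  induction C generalizing w g g' with
  | atom P ts =>
    simp only [Fm.Sat]
    rw [List.map_congr_left fun t ht =>
      Tm.val_congr M (h.mono fun _ hy => Exists.intro t ⟨ht, hy⟩)]
  | bot => rfl
  | and A B ihA ihB | or A B ihA ihB | impI A B ihA ihB | impC A B ihA ihB =>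
    have hA := fun w => ihA (w := w) (h.mono subset_union_left)
    have hB := fun w => ihB (w := w) (h.mono subset_union_right)
    simp only [Fm.Sat, hA, hB]
  | allI y A ih =>
    exact forall₂_congr fun v _ => forall₂_congr fun d _ => ih (eqOn_update_update h)
  | allC y A ih => exact forall₂_congr fun d _ => ih (eqOn_update_update h)
  | ex y A ih => exact exists_congr fun d => and_congr_right fun _ => ih (eqOn_update_update h)

theorem Fm.Persistent.sat_of_rel (hM : M.IsKripke) {C : Fm} (hC : C.Persistent)
    {w v : M.W} (hwv : M.R w v) {g : ℕ → U} (hw : C.Sat M w g) : C.Sat M v g := by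
  cases C with
  | atom P ts => exact hM.vMono P hwv hw
  | impI A B => exact fun u hvu => hw u (hM.trans hwv hvu)
  | allI y A => exact fun u hvu => hw u (hM.trans hwv hvu)
  | _ => exact hC.elim

theorem Fm.sat_subst_update {A : Fm} {x y : ℕ} {t : Tm} (hy : y ∉ t.fv)
    (hA : ∀ w g, (A.subst x t).Sat M w g ↔ A.Sat M w (update g x (t.val M g)))
    (w : M.W) (g : ℕ → U) (d : U) :
    (if y = x then A else A.subst x t).Sat M w (update g y d) ↔
      A.Sat M w (update (update g x (t.val M g)) y d) := by
  split_ifs with hyx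
  · rw [hyx, update_idem]
  · rw [hA, Tm.val_congr M (eqOn_update_of_notMem hy), update_comm hyx]

theorem Fm.sat_subst (A : Fm) {x : ℕ} {t : Tm} (h : Disjoint A.bv t.fv)
    (w : M.W) (g : ℕ → U) :
    (A.subst x t).Sat M w g ↔ A.Sat M w (update g x (t.val M g)) := by
  induction A generalizing w g with
  | atom P ts => simp only [Fm.Sat, Fm.subst, List.map_map, Function.comp_def, Tm.val_subst]
  | bot => rfl
  | and A B ihA ihB | or A B ihA ihB | impI A B ihA ihB | impC A B ihA ihB =>
    obtain ⟨hA, hB⟩ := disjoint_union_left.1 h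
    simp only [Fm.Sat, Fm.subst, ihA hA, ihB hB]
  | allI y A ih =>
    obtain ⟨hy, hA⟩ := disjoint_insert_left.1 h
    exact forall₂_congr fun v _ => forall₂_congr fun d _ => sat_subst_update M hy (ih hA) v g d
  | allC y A ih =>
    obtain ⟨hy, hA⟩ := disjoint_insert_left.1 h
    exact forall₂_congr fun d _ => sat_subst_update M hy (ih hA) w g d
  | ex y A ih =>
    obtain ⟨hy, hA⟩ := disjoint_insert_left.1 h
    exact exists_congr fun d => and_congr_right fun _ => sat_subst_update M hy (ih hA) w g d

end Semantics

/-- soundness of the restricted right rule (⇒∀ᵢ): if `Θ`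
consists of persistent formulas, `z` does not occur free in `Θ` nor in
`∀ᵢx A` (nor bound in `A`, so that `[z/x]` is clash-avoiding), and
`Θ ⊨ A[z/x]`, then `Θ ⊨ ∀ᵢx A`. -/
theorem allIR_sound (Θ : List Fm) (A : Fm) (x z : ℕ)
    (hΘ : ∀ C ∈ Θ, Fm.Persistent C)
    (hz1 : ∀ C ∈ Θ, z ∉ Fm.fv C)
    (hz2 : z ∉ Fm.fv (.allI x A))
    (hz3 : z ∉ Fm.bv A)
    (h : Conseq Θ [A.subst x (.var z)]) : Conseq Θ [.allI x A] := by
  intro U M hM w g hg hΘw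
  refine ⟨.allI x A, List.mem_singleton_self _, fun v hwv d hd => ?_⟩
  have hg' : ∀ y, update g z d y ∈ M.D v := by
    intro y
    by_cases hyz : y = z
    · simpa [hyz] using hd
    · simpa [hyz] using hM.dMono hwv (hg y)
  have hΘv : ∀ C ∈ Θ, C.Sat M v (update g z d) := fun C hC =>
    (C.sat_congr M (eqOn_update_of_notMem (hz1 C hC))).2
      ((hΘ C hC).sat_of_rel M hM hwv (hΘw C hC))
  obtain ⟨B, hB, hBv⟩ := h U M hM v _ hg' hΘv
  rw [List.mem_singleton.1 hB, A.sat_subst M (t := .var z) (disjoint_singleton_right.2 hz3),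
    Tm.val, update_self] at hBv
  exact (A.sat_congr M (eqOn_update_update (eqOn_update_of_notMem hz2))).1 hBv
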